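/- With t(z₁,z₂) = 1 + 2(z₁−z₂)(z̄₂−z̄₁)/((z₁−z̄₁)(z₂−z̄₂)) and Q_{z₂}(z₁) = (z₁−z₂)(z₁−z̄₂)/(z₂−z̄₂), one has ∂t/∂z₁ = ((t²−1)/2)·Q_{z₂}(z₁)^{−1}, provided z₁ ∉ {z₂, z̄₂} and z_i ≠ z̄_i. -/

import Mathlib

/-! As a function of `z₁`, `t` is the Möbius map `1 + c · (z₁ - z₂) / (z₁ - w₁)` with
`c = 2 (w₂ - w₁) / (z₂ - w₂)`, whose derivative is `c (z₂ - w₁) / (z₁ - w₁)²`. On the other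
side, `t - 1` and `t + 1` factor as `2 (z₁ - z₂)(w₂ - w₁)` and `2 (z₁ - w₂)(z₂ - w₁)` over
`(z₁ - w₁)(z₂ - w₂)`, so dividing `(t² - 1)/2` by `Q_{z₂}(z₁)` cancels the factors `z₁ - z₂`
and `z₁ - w₂` and leaves the same expression. -/

/-- `t(z₁,z₂) = 1 + 2(z₁−z₂)(z̄₂−z̄₁)/((z₁−z̄₁)(z₂−z̄₂))`, with `z̄₁ = w₁`, `z̄₂ = w₂`
treated as independent antiholomorphic variables. -/
noncomputable def tdist (z₁ z₂ w₁ w₂ : ℂ) : ℂ :=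
  1 + 2 * (z₁ - z₂) * (w₂ - w₁) / ((z₁ - w₁) * (z₂ - w₂))

theorem hasDerivAt_sub_div_sub {𝕜 : Type*} [NontriviallyNormedField 𝕜] {a b z : 𝕜}
    (hz : z ≠ b) :
    HasDerivAt (fun x => (x - a) / (x - b)) ((a - b) / (z - b) ^ 2) z :=
  (((hasDerivAt_id' z).sub_const a).fun_div ((hasDerivAt_id' z).sub_const b)
    (sub_ne_zero.mpr hz)).congr_deriv (by ring)

theorem tdist_eq_one_add_mul_div (z₁ z₂ w₁ w₂ : ℂ) :
    tdist z₁ z₂ w₁ w₂ = 1 + 2 * (w₂ - w₁) / (z₂ - w₂) * ((z₁ - z₂) / (z₁ - w₁)) := by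
  rw [tdist, div_mul_div_comm, mul_comm (z₂ - w₂)]
  ring

theorem hasDerivAt_tdist {z₁ : ℂ} (z₂ w₁ w₂ : ℂ) (h11 : z₁ ≠ w₁) :
    HasDerivAt (fun z => tdist z z₂ w₁ w₂)
      (2 * (w₁ - z₂) * (w₁ - w₂) / ((z₁ - w₁) ^ 2 * (z₂ - w₂))) z₁ := by
  simp only [tdist_eq_one_add_mul_div]
  refine (((hasDerivAt_sub_div_sub (a := z₂) h11).const_mul
    (2 * (w₂ - w₁) / (z₂ - w₂))).const_add 1).congr_deriv ?_
  rw [div_mul_div_comm, mul_comm (z₂ - w₂)]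
  ring

theorem tdist_sq_sub_one_div_two {z₁ z₂ w₁ w₂ : ℂ} (h11 : z₁ ≠ w₁) (h22 : z₂ ≠ w₂) :
    (tdist z₁ z₂ w₁ w₂ ^ 2 - 1) / 2 =
      2 * (z₁ - z₂) * (w₂ - w₁) * (z₁ - w₂) * (z₂ - w₁) / ((z₁ - w₁) ^ 2 * (z₂ - w₂) ^ 2) := by
  have : z₁ - w₁ ≠ 0 := sub_ne_zero.mpr h11
  have : z₂ - w₂ ≠ 0 := sub_ne_zero.mpr h22
  rw [tdist]
  field_simp
  ring

/-- with `Q_{z₂}(z₁) = (z₁−z₂)(z₁−z̄₂)/(z₂−z̄₂)` one has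
`∂t/∂z₁ = ((t²−1)/2)·Q_{z₂}(z₁)⁻¹`, provided `z₁ ∉ {z₂, z̄₂}` and `z_i ≠ z̄_i`. -/
theorem statement3 (z₁ z₂ w₁ w₂ : ℂ) (h11 : z₁ ≠ w₁) (h22 : z₂ ≠ w₂)
    (hz : z₁ ≠ z₂) (h12 : z₁ ≠ w₂) :
    deriv (fun z => tdist z z₂ w₁ w₂) z₁ =
      (tdist z₁ z₂ w₁ w₂ ^ 2 - 1) / 2 * ((z₁ - z₂) * (z₁ - w₂) / (z₂ - w₂))⁻¹ := by
  rw [(hasDerivAt_tdist z₂ w₁ w₂ h11).deriv, tdist_sq_sub_one_div_two h11 h22]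
  have : z₁ - w₁ ≠ 0 := sub_ne_zero.mpr h11
  have : z₂ - w₂ ≠ 0 := sub_ne_zero.mpr h22
  have : z₁ - z₂ ≠ 0 := sub_ne_zero.mpr hz
  have : z₁ - w₂ ≠ 0 := sub_ne_zero.mpr h12
  field_simp
  ring
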